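/- Let L_s(u,λ) = L(u,λ) + s L¹(u,λ) + R_s(u,λ) be a family of convex-concave Lagrangians over V × K* with saddle points (u_s, λ_s) of L_s and (u₀, λ₀) of L = L₀. Suppose u_s → u₀ in V, λ_s → λ₀ in H*, L¹ is continuous, and |R_s(u,λ)| = o(s) uniformly on bounded sets. Then (L_s(u_s, λ_s) − L(u₀, λ₀))/s → L¹(u₀, λ₀) as s → 0. -/

import Mathlib

/-!
Comparing the saddle point inequalities of `L_s` and of `L` gives
`L_s(u_s, λ₀) - L(u_s, λ₀) ≤ L_s(u_s, λ_s) - L(u₀, λ₀) ≤ L_s(u₀, λ_s) - L(u₀, λ_s)`.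
The outer terms are `s L¹(u_s, λ₀) + o(s)` and `s L¹(u₀, λ_s) + o(s)`; after division by `s`
both tend to `L¹(u₀, λ₀)` by continuity of `L¹`, and the difference quotient is squeezed
between them (in one order or the other according to the sign of `s`).
-/

open Filter Topology Asymptotics Set

theorem IsSaddlePointOn.sub_mem_Icc {E F β : Type*} [AddCommGroup β] [PartialOrder β]
    [IsOrderedAddMonoid β] {X : Set E} {Y : Set F} {f g : E → F → β} {a a' : E} {b b' : F}
    (hf : IsSaddlePointOn X Y f a b) (hg : IsSaddlePointOn X Y g a' b')
    (ha : a ∈ X) (ha' : a' ∈ X) (hb : b ∈ Y) (hb' : b' ∈ Y) :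
    f a b - g a' b' ∈ Icc (f a b' - g a b') (f a' b - g a' b) :=
  ⟨sub_le_sub (hf a ha b' hb') (hg a ha b' hb'), sub_le_sub (hf a' ha' b hb) (hg a' ha' b hb)⟩

theorem isLittleO_id_of_tendsto {E F : Type*} [SeminormedAddCommGroup E]
    [SeminormedAddCommGroup F] {R : ℝ → E × F → ℝ}
    (hR : ∀ M : ℝ, 0 < M → ∀ ε : ℝ, 0 < ε → ∃ δ : ℝ, 0 < δ ∧
      ∀ s : ℝ, |s| < δ → ∀ x : E × F, ‖x.1‖ ≤ M → ‖x.2‖ ≤ M → |R s x| ≤ ε * |s|)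
    {l : Filter ℝ} (hl : l ≤ 𝓝 0) {x : ℝ → E × F} {x₀ : E × F} (hx : Tendsto x l (𝓝 x₀)) :
    (fun s => R s (x s)) =o[l] id := by
  refine IsLittleO.of_bound fun ε hε => ?_
  obtain ⟨δ, hδ, hRδ⟩ := hR (‖x₀‖ + 1) (by positivity) ε hε
  have hsmall : ∀ᶠ s in l, |s| < δ :=
    hl (by simpa [Metric.ball, Real.dist_eq] using Metric.ball_mem_nhds (0 : ℝ) hδ)
  have hbdd : ∀ᶠ s in l, ‖x s‖ ≤ ‖x₀‖ + 1 := hx.norm.eventually (ge_mem_nhds (lt_add_one _))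
  filter_upwards [hsmall, hbdd] with s hs hxs
  simpa using hRδ s hs (x s) ((norm_fst_le _).trans hxs) ((norm_snd_le _).trans hxs)

theorem div_mem_uIcc_of_mul_le_of_le_mul {s A B D : ℝ} (hs : s ≠ 0)
    (hA : s * A ≤ D) (hB : D ≤ s * B) : D / s ∈ uIcc A B := by
  rcases hs.lt_or_gt with hneg | hpos
  · exact Icc_subset_uIcc' ⟨(le_div_iff_of_neg hneg).2 (by linarith),
      (div_le_iff_of_neg hneg).2 (by linarith)⟩
  · exact Icc_subset_uIcc ⟨(le_div_iff₀ hpos).2 (by linarith), (div_le_iff₀ hpos).2 (by linarith)⟩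

theorem tendsto_div_of_mul_add_le_of_le_mul_add {a b r₁ r₂ D : ℝ → ℝ} {ℓ : ℝ}
    (ha : Tendsto a (𝓝[≠] 0) (𝓝 ℓ)) (hb : Tendsto b (𝓝[≠] 0) (𝓝 ℓ))
    (hr₁ : r₁ =o[𝓝[≠] 0] id) (hr₂ : r₂ =o[𝓝[≠] 0] id)
    (hlow : ∀ s, s * a s + r₁ s ≤ D s) (hup : ∀ s, D s ≤ s * b s + r₂ s) :
    Tendsto (fun s => D s / s) (𝓝[≠] 0) (𝓝 ℓ) := by
  set A := fun s => a s + r₁ s / s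
  set B := fun s => b s + r₂ s / s
  have hA : Tendsto A (𝓝[≠] 0) (𝓝 ℓ) := by simpa using ha.add hr₁.tendsto_div_nhds_zero
  have hB : Tendsto B (𝓝[≠] 0) (𝓝 ℓ) := by simpa using hb.add hr₂.tendsto_div_nhds_zero
  have hmem : ∀ᶠ s in 𝓝[≠] 0, D s / s ∈ uIcc (A s) (B s) := by
    filter_upwards [self_mem_nhdsWithin] with s (hs : s ≠ 0)
    refine div_mem_uIcc_of_mul_le_of_le_mul hs ?_ ?_
    · simpa [A, mul_add, mul_div_cancel₀ _ hs] using hlow s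
    · simpa [B, mul_add, mul_div_cancel₀ _ hs] using hup s
  exact tendsto_of_tendsto_of_tendsto_of_le_of_le' (by simpa using hA.min hB)
    (by simpa using hA.max hB) (hmem.mono fun _ h => h.1) (hmem.mono fun _ h => h.2)

theorem stmt11_general
    {V H : Type*} [NormedAddCommGroup V] [InnerProductSpace ℝ V]
    [NormedAddCommGroup H] [InnerProductSpace ℝ H]
    (Kstar : Set (H →L[ℝ] ℝ))
    (L L1 : V × (H →L[ℝ] ℝ) → ℝ) (R : ℝ → V × (H →L[ℝ] ℝ) → ℝ)
    (Ls : ℝ → V × (H →L[ℝ] ℝ) → ℝ)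
    (hLs : ∀ s x, Ls s x = L x + s * L1 x + R s x)
    (us : ℝ → V) (lams : ℝ → (H →L[ℝ] ℝ)) (hlams : ∀ s, lams s ∈ Kstar)
    (hsaddle_s : ∀ s, ∀ w : V, ∀ p ∈ Kstar,
      Ls s (us s, p) ≤ Ls s (us s, lams s) ∧ Ls s (us s, lams s) ≤ Ls s (w, lams s))
    (u₀ : V) (lam₀ : H →L[ℝ] ℝ) (hlam₀ : lam₀ ∈ Kstar)
    (hsaddle₀ : ∀ w : V, ∀ p ∈ Kstar,
      L (u₀, p) ≤ L (u₀, lam₀) ∧ L (u₀, lam₀) ≤ L (w, lam₀))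
    (hconv_u : Filter.Tendsto us (nhdsWithin 0 {0}ᶜ) (nhds u₀))
    (hconv_lam : Filter.Tendsto lams (nhdsWithin 0 {0}ᶜ) (nhds lam₀))
    (hL1cont : Continuous L1)
    (hR : ∀ M : ℝ, 0 < M → ∀ ε : ℝ, 0 < ε → ∃ δ : ℝ, 0 < δ ∧
      ∀ s : ℝ, |s| < δ → ∀ x : V × (H →L[ℝ] ℝ),
        ‖x.1‖ ≤ M → ‖x.2‖ ≤ M → |R s x| ≤ ε * |s|) :
    Filter.Tendsto (fun s => (Ls s (us s, lams s) - L (u₀, lam₀)) / s)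
      (nhdsWithin 0 {0}ᶜ) (nhds (L1 (u₀, lam₀))) := by
  have hconv_low : Tendsto (fun s => (us s, lam₀)) (𝓝[≠] 0) (𝓝 (u₀, lam₀)) :=
    hconv_u.prodMk_nhds tendsto_const_nhds
  have hconv_up : Tendsto (fun s => (u₀, lams s)) (𝓝[≠] 0) (𝓝 (u₀, lam₀)) :=
    tendsto_const_nhds.prodMk_nhds hconv_lam
  have hsaddle0 : IsSaddlePointOn univ Kstar (fun u p => L (u, p)) u₀ lam₀ :=
    fun w _ p hp => (hsaddle₀ w p hp).1.trans (hsaddle₀ w p hp).2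
  have hbounds s := IsSaddlePointOn.sub_mem_Icc (f := fun u p => Ls s (u, p))
    (fun w _ p hp => (hsaddle_s s w p hp).1.trans (hsaddle_s s w p hp).2) hsaddle0
    (mem_univ _) (mem_univ _) (hlams s) hlam₀
  refine tendsto_div_of_mul_add_le_of_le_mul_add
    ((hL1cont.tendsto _).comp hconv_low) ((hL1cont.tendsto _).comp hconv_up)
    (isLittleO_id_of_tendsto hR nhdsWithin_le_nhds hconv_low)
    (isLittleO_id_of_tendsto hR nhdsWithin_le_nhds hconv_up) (fun s => ?_) (fun s => ?_)
  · have := (hbounds s).1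
    simp only [hLs s (us s, lam₀)] at this
    simp only [Function.comp_apply]
    linarith
  · have := (hbounds s).2
    simp only [hLs s (u₀, lams s)] at this
    simp only [Function.comp_apply]
    linarith

/-- differentiability of the optimal value of a perturbed family
of Lagrangians `L_s = L + s L¹ + R_s` with saddle points `(u_s, lam_s)`
converging to `(u₀, lam₀)`: the difference quotient of the saddle values
converges to `L¹(u₀, lam₀)`. -/
theorem stmt11
    {V H : Type*} [NormedAddCommGroup V] [InnerProductSpace ℝ V] [CompleteSpace V]
    [NormedAddCommGroup H] [InnerProductSpace ℝ H] [CompleteSpace H]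
    (Kstar : Set (H →L[ℝ] ℝ)) (hKc : IsClosed Kstar) (hKconv : Convex ℝ Kstar)
    (hKcone : ∀ l ∈ Kstar, ∀ t : ℝ, 0 ≤ t → t • l ∈ Kstar)
    (L L1 : V × (H →L[ℝ] ℝ) → ℝ) (R : ℝ → V × (H →L[ℝ] ℝ) → ℝ)
    (Ls : ℝ → V × (H →L[ℝ] ℝ) → ℝ)
    (hLs : ∀ s x, Ls s x = L x + s * L1 x + R s x)
    (us : ℝ → V) (lams : ℝ → (H →L[ℝ] ℝ)) (hlams : ∀ s, lams s ∈ Kstar)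
    (hsaddle_s : ∀ s, ∀ w : V, ∀ p ∈ Kstar,
      Ls s (us s, p) ≤ Ls s (us s, lams s) ∧ Ls s (us s, lams s) ≤ Ls s (w, lams s))
    (u₀ : V) (lam₀ : H →L[ℝ] ℝ) (hlam₀ : lam₀ ∈ Kstar)
    (hsaddle₀ : ∀ w : V, ∀ p ∈ Kstar,
      L (u₀, p) ≤ L (u₀, lam₀) ∧ L (u₀, lam₀) ≤ L (w, lam₀))
    (hconv_u : Filter.Tendsto us (nhdsWithin 0 {0}ᶜ) (nhds u₀))
    (hconv_lam : Filter.Tendsto lams (nhdsWithin 0 {0}ᶜ) (nhds lam₀))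
    (hL1cont : Continuous L1)
    (hR : ∀ M : ℝ, 0 < M → ∀ ε : ℝ, 0 < ε → ∃ δ : ℝ, 0 < δ ∧
      ∀ s : ℝ, |s| < δ → ∀ x : V × (H →L[ℝ] ℝ),
        ‖x.1‖ ≤ M → ‖x.2‖ ≤ M → |R s x| ≤ ε * |s|) :
    Filter.Tendsto (fun s => (Ls s (us s, lams s) - L (u₀, lam₀)) / s)
      (nhdsWithin 0 {0}ᶜ) (nhds (L1 (u₀, lam₀))) :=
  stmt11_general Kstar L L1 R Ls hLs us lams hlams hsaddle_s u₀ lam₀ hlam₀ hsaddle₀ hconv_u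
    hconv_lam hL1cont hR
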